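/- If A ~ sExp(λ₁+λ₂, c), B ~ sExp(λ₁, c), C ~ sExp(λ₂, c) are independent (λ₁, λ₂ > 0, c ∈ ℝ), then (min{B,C}, A + max{B−C,0}, A − min{B−C,0}) has the same joint distribution as (A, B, C). -/

import Mathlib

open MeasureTheory

/-- The shifted exponential distribution `sExp(l, c)`:
density `l * exp (-l * (x - c))` on `[c, ∞)`. -/
noncomputable def sExpMeasure (l c : ℝ) : Measure ℝ :=
  volume.withDensity fun x =>
    ENNReal.ofReal (if c ≤ x then l * Real.exp (-l * (x - c)) else 0)

/-!
With respect to Lebesgue measure on `ℝ³`, the joint law of `(A, B, C)` has density proportional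
to `exp (-(l₁ (a + b) + l₂ (a + c)))` on the orthant `[c, ∞)³`. The map `F` preserves the
orthant and the two sums `a + b`, `a + c`, hence the density. It also preserves Lebesgue measure:
with `x = min b c` and `e = c - b` it factors as
`(a, b, c) ↦ (a, x, e) ↦ (x, a, e) ↦ (x, a + max (-e) 0, a + max e 0)`, a coordinate swap between
two maps that act on the last two coordinates by a composition of two shears
`y ↦ y + φ (other coordinate)`, and shears preserve Lebesgue measure by Fubini.
-/

open scoped ENNReal

section MeasurePreserving

variable {α β γ : Type*} [MeasurableSpace α] [MeasurableSpace β] [MeasurableSpace γ]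

theorem MeasureTheory.MeasurePreserving.map_withDensity_comp {μ : Measure α} {ν : Measure β}
    {e : α → β} (he : MeasurePreserving e μ ν) {f : β → ℝ≥0∞} (hf : Measurable f) :
    (μ.withDensity (f ∘ e)).map e = ν.withDensity f := by
  ext s hs
  rw [Measure.map_apply he.measurable hs, withDensity_apply _ hs,
    withDensity_apply _ (he.measurable hs), ← he.map_eq, setLIntegral_map hs hf he.measurable]
  rfl

theorem measurePreserving_add_snd (μ : Measure α) [SFinite μ] {f : α → ℝ} (hf : Measurable f) :
    MeasurePreserving (fun p : α × ℝ => (p.1, p.2 + f p.1)) (μ.prod volume) (μ.prod volume) :=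
  (MeasurePreserving.id μ).skew_product (by fun_prop)
    (ae_of_all _ fun a => (measurePreserving_add_right volume (f a)).map_eq)

theorem measurePreserving_add_fst (μ : Measure α) [SFinite μ] {f : α → ℝ} (hf : Measurable f) :
    MeasurePreserving (fun p : ℝ × α => (p.1 + f p.2, p.2)) (volume.prod μ) (volume.prod μ) :=
  Measure.measurePreserving_swap.comp
    ((measurePreserving_add_snd μ hf).comp Measure.measurePreserving_swap)

theorem measurePreserving_prodLeftComm (μ : Measure α) (ν : Measure β) (ρ : Measure γ)
    [SFinite μ] [SFinite ν] [SFinite ρ] :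
    MeasurePreserving (fun p : α × β × γ => (p.2.1, p.1, p.2.2))
      (μ.prod (ν.prod ρ)) (ν.prod (μ.prod ρ)) :=
  (measurePreserving_prodAssoc ν μ ρ).comp
    ((Measure.measurePreserving_swap.prod (MeasurePreserving.id ρ)).comp
      (measurePreserving_prodAssoc μ ν ρ).symm)

end MeasurePreserving

section UdToda

variable {G : Type*} [AddCommGroup G] [LinearOrder G] [IsOrderedAddMonoid G]

def udToda (p : G × G × G) : G × G × G :=
  (min p.2.1 p.2.2, p.1 + max (p.2.1 - p.2.2) 0, p.1 - min (p.2.1 - p.2.2) 0)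

theorem udToda_fst_add_snd_fst (p : G × G × G) :
    (udToda p).1 + (udToda p).2.1 = p.1 + p.2.1 := by
  grind [udToda]

theorem udToda_fst_add_snd_snd (p : G × G × G) :
    (udToda p).1 + (udToda p).2.2 = p.1 + p.2.2 := by
  grind [udToda]

theorem le_udToda_iff (c : G) (p : G × G × G) :
    (c ≤ (udToda p).1 ∧ c ≤ (udToda p).2.1 ∧ c ≤ (udToda p).2.2) ↔
      (c ≤ p.1 ∧ c ≤ p.2.1 ∧ c ≤ p.2.2) := by
  grind [udToda]

end UdToda

theorem measurePreserving_udToda : MeasurePreserving (udToda : ℝ × ℝ × ℝ → ℝ × ℝ × ℝ) := by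
  have hG : MeasurePreserving (fun q : ℝ × ℝ => (q.1 + min (q.2 + -q.1) 0, q.2 + -q.1)) :=
    (measurePreserving_add_fst volume (f := fun e => min e 0) (by fun_prop)).comp
      (measurePreserving_add_snd volume measurable_neg)
  have hH : MeasurePreserving
      (fun q : ℝ × ℝ => (q.1 + max (-q.2) 0, q.2 + (q.1 + max (-q.2) 0))) :=
    (measurePreserving_add_snd volume measurable_id).comp
      (measurePreserving_add_fst volume (f := fun e => max (-e) 0) (by fun_prop))
  have h : MeasurePreserving (Prod.map id _ ∘ _ ∘ Prod.map id _) volume volume :=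
    ((MeasurePreserving.id volume).prod hH).comp
      ((measurePreserving_prodLeftComm volume volume volume).comp
        ((MeasurePreserving.id volume).prod hG))
  refine (congrArg (MeasurePreserving · volume volume) (funext fun ⟨a, b, d⟩ => ?_)).mpr h
  simp only [udToda, Function.comp_apply, Prod.map_apply, id, Prod.mk.injEq]
  grind

noncomputable def sExpDensity (l c x : ℝ) : ℝ≥0∞ :=
  ENNReal.ofReal (if c ≤ x then l * Real.exp (-l * (x - c)) else 0)

theorem sExpMeasure_eq_withDensity (l c : ℝ) :
    sExpMeasure l c = volume.withDensity (sExpDensity l c) := rfl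

@[fun_prop]
theorem measurable_sExpDensity (l c : ℝ) : Measurable (sExpDensity l c) :=
  (Measurable.ite measurableSet_Ici (by fun_prop) measurable_const).ennreal_ofReal

theorem sExpDensity_of_le {l c x : ℝ} (h : c ≤ x) :
    sExpDensity l c x = ENNReal.ofReal l * ENNReal.ofReal (Real.exp (-l * (x - c))) := by
  rw [sExpDensity, if_pos h, ENNReal.ofReal_mul' (Real.exp_pos _).le]

theorem sExpDensity_of_lt {l c x : ℝ} (h : x < c) : sExpDensity l c x = 0 := by
  rw [sExpDensity, if_neg h.not_ge, ENNReal.ofReal_zero]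

theorem sExpDensity_mul_mul (l l₁ l₂ c x y z : ℝ) :
    sExpDensity l c x * (sExpDensity l₁ c y * sExpDensity l₂ c z) =
      if c ≤ x ∧ c ≤ y ∧ c ≤ z then
        ENNReal.ofReal l * (ENNReal.ofReal l₁ * ENNReal.ofReal l₂) *
          ENNReal.ofReal (Real.exp (-(l * (x - c) + l₁ * (y - c) + l₂ * (z - c))))
      else 0 := by
  split_ifs with h
  · obtain ⟨hx, hy, hz⟩ := h
    have hexp : Real.exp (-(l * (x - c) + l₁ * (y - c) + l₂ * (z - c))) =
        Real.exp (-l * (x - c)) * (Real.exp (-l₁ * (y - c)) * Real.exp (-l₂ * (z - c))) := by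
      rw [← Real.exp_add, ← Real.exp_add]
      congr 1
      ring
    rw [sExpDensity_of_le hx, sExpDensity_of_le hy, sExpDensity_of_le hz, hexp,
      ENNReal.ofReal_mul (Real.exp_pos _).le, ENNReal.ofReal_mul (Real.exp_pos _).le]
    ring
  · simp only [not_and_or, not_le] at h
    rcases h with h | h | h <;> simp [sExpDensity_of_lt h]

theorem sExpDensity_udToda (l₁ l₂ c : ℝ) (p : ℝ × ℝ × ℝ) :
    sExpDensity (l₁ + l₂) c (udToda p).1 *
        (sExpDensity l₁ c (udToda p).2.1 * sExpDensity l₂ c (udToda p).2.2) =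
      sExpDensity (l₁ + l₂) c p.1 * (sExpDensity l₁ c p.2.1 * sExpDensity l₂ c p.2.2) := by
  have hexponent : (l₁ + l₂) * ((udToda p).1 - c) + l₁ * ((udToda p).2.1 - c) +
      l₂ * ((udToda p).2.2 - c) = (l₁ + l₂) * (p.1 - c) + l₁ * (p.2.1 - c) + l₂ * (p.2.2 - c) := by
    linear_combination l₁ * udToda_fst_add_snd_fst p + l₂ * udToda_fst_add_snd_snd p
  rw [sExpDensity_mul_mul, sExpDensity_mul_mul, hexponent]
  simp only [le_udToda_iff]

theorem udToda_sExp_invariance_general (l₁ l₂ c : ℝ) :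
    Measure.map
      (fun p : ℝ × ℝ × ℝ =>
        (min p.2.1 p.2.2, p.1 + max (p.2.1 - p.2.2) 0, p.1 - min (p.2.1 - p.2.2) 0))
      ((sExpMeasure (l₁ + l₂) c).prod ((sExpMeasure l₁ c).prod (sExpMeasure l₂ c))) =
      (sExpMeasure (l₁ + l₂) c).prod ((sExpMeasure l₁ c).prod (sExpMeasure l₂ c)) := by
  set ρ : ℝ × ℝ × ℝ → ℝ≥0∞ := fun p =>
    sExpDensity (l₁ + l₂) c p.1 * (sExpDensity l₁ c p.2.1 * sExpDensity l₂ c p.2.2)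
  have hρ : Measurable ρ := by fun_prop
  have hprod : (sExpMeasure (l₁ + l₂) c).prod ((sExpMeasure l₁ c).prod (sExpMeasure l₂ c)) =
      volume.withDensity ρ := by
    simp only [sExpMeasure_eq_withDensity]
    rw [prod_withDensity (by fun_prop) (by fun_prop), prod_withDensity (by fun_prop) (by fun_prop)]
    rfl
  have hρ_udToda : ρ ∘ udToda = ρ := funext (sExpDensity_udToda l₁ l₂ c)
  rw [hprod]
  conv_lhs => rw [← hρ_udToda]
  exact measurePreserving_udToda.map_withDensity_comp hρ

theorem udToda_sExp_invariance (l₁ l₂ c : ℝ) (hl₁ : 0 < l₁) (hl₂ : 0 < l₂) :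
    Measure.map
      (fun p : ℝ × ℝ × ℝ =>
        (min p.2.1 p.2.2, p.1 + max (p.2.1 - p.2.2) 0, p.1 - min (p.2.1 - p.2.2) 0))
      ((sExpMeasure (l₁ + l₂) c).prod ((sExpMeasure l₁ c).prod (sExpMeasure l₂ c))) =
      (sExpMeasure (l₁ + l₂) c).prod ((sExpMeasure l₁ c).prod (sExpMeasure l₂ c)) :=
  udToda_sExp_invariance_general l₁ l₂ c
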